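/- Consider Bianchi type VII_h subtype (3) with brackets [e₁,e₂]=-he₁+e₃, [e₂,e₃]=e₁+he₃, [e₃,e₁]=0 and metric g=diag(1,-1,1). Then the curvature tensor satisfies R₁₂₁₂ = h², R₁₃₁₃ = -h², R₂₃₂₃ = h², the Ricci tensor satisfies ρ₁₁ = 2h², ρ₂₂ = -2h², ρ₃₃ = 2h² (so ρ = 2h²g and the manifold is Einstein), and the scalar curvature is τ = 6h². -/
import Mathlib


noncomputable section

def e (i : Fin 3) : Fin 3 → ℝ := Pi.single i 1

def gB (x y : Fin 3 → ℝ) : ℝ := x 0 * y 0 - x 1 * y 1 + x 2 * y 2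

/-- The inverse metric entries g¹¹=1, g²²=-1, g³³=1. -/
def ginv : Fin 3 → ℝ := ![1, -1, 1]

/-- The Lie bracket of Bia(VII_h), subtype (3):
[e₁,e₂]=-he₁+e₃, [e₂,e₃]=e₁+he₃, [e₃,e₁]=0 (bilinear extension). -/
def brVII3 (h : ℝ) (x y : Fin 3 → ℝ) : Fin 3 → ℝ :=
  ![-h * (x 0 * y 1 - x 1 * y 0) + (x 1 * y 2 - x 2 * y 1),
    0,
    (x 0 * y 1 - x 1 * y 0) + h * (x 1 * y 2 - x 2 * y 1)]

/-- The curvature (0,4)-tensor. -/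
def Rt (h : ℝ) (nabla : (Fin 3 → ℝ) →ₗ[ℝ] (Fin 3 → ℝ) →ₗ[ℝ] (Fin 3 → ℝ))
    (x y z w : Fin 3 → ℝ) : ℝ :=
  gB (nabla x (nabla y z) - nabla y (nabla x z) - nabla (brVII3 h x y) z) w

/-- The Ricci tensor ρ(eⱼ,eₖ) = Σᵢ gⁱⁱ R(eᵢ,eⱼ,eₖ,eᵢ). -/
def ricci (h : ℝ) (nabla : (Fin 3 → ℝ) →ₗ[ℝ] (Fin 3 → ℝ) →ₗ[ℝ] (Fin 3 → ℝ))
    (j k : Fin 3) : ℝ :=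
  ∑ i, ginv i * Rt h nabla (e i) (e j) (e k) (e i)

/-- Explicit formula for the Levi-Civita connection. -/
def Nc (h : ℝ) (x y : Fin 3 → ℝ) : Fin 3 → ℝ :=
  ![-h * (x 0 * y 1) + x 1 * y 2,
    -h * (x 0 * y 0) - h * (x 2 * y 2),
    -(x 1 * y 0) - h * (x 2 * y 1)]

lemma comp_of_gB (v : Fin 3 → ℝ) (k : Fin 3) : v k = ginv k * gB v (e k) := by
  fin_cases k <;> simp [gB, ginv, e, Pi.single] <;> ring

lemma decomp (v : Fin 3 → ℝ) : v = v 0 • e 0 + v 1 • e 1 + v 2 • e 2 := by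
  funext k
  fin_cases k <;> simp [e, Pi.single]

lemma nabla_basis (h : ℝ)
    (nabla : (Fin 3 → ℝ) →ₗ[ℝ] (Fin 3 → ℝ) →ₗ[ℝ] (Fin 3 → ℝ))
    (hK : ∀ i j k : Fin 3,
      2 * gB (nabla (e i) (e j)) (e k) =
        gB (brVII3 h (e i) (e j)) (e k) + gB (brVII3 h (e k) (e i)) (e j)
          + gB (brVII3 h (e k) (e j)) (e i))
    (i j : Fin 3) : nabla (e i) (e j) = Nc h (e i) (e j) := by
  funext k
  have h1 := hK i j k
  have h2 := comp_of_gB (nabla (e i) (e j)) k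
  have h3 : gB (nabla (e i) (e j)) (e k) =
      (gB (brVII3 h (e i) (e j)) (e k) + gB (brVII3 h (e k) (e i)) (e j)
          + gB (brVII3 h (e k) (e j)) (e i)) / 2 := by linarith
  rw [h2, h3]
  fin_cases i <;> fin_cases j <;> fin_cases k <;>
    simp [gB, ginv, brVII3, Nc, e, Pi.single] <;> ring

lemma nabla_eq (h : ℝ)
    (nabla : (Fin 3 → ℝ) →ₗ[ℝ] (Fin 3 → ℝ) →ₗ[ℝ] (Fin 3 → ℝ))
    (hK : ∀ i j k : Fin 3,
      2 * gB (nabla (e i) (e j)) (e k) =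
        gB (brVII3 h (e i) (e j)) (e k) + gB (brVII3 h (e k) (e i)) (e j)
          + gB (brVII3 h (e k) (e j)) (e i))
    (x y : Fin 3 → ℝ) : nabla x y = Nc h x y := by
  have hb := nabla_basis h nabla hK
  calc nabla x y
      = nabla (x 0 • e 0 + x 1 • e 1 + x 2 • e 2)
          (y 0 • e 0 + y 1 • e 1 + y 2 • e 2) := by rw [← decomp, ← decomp]
    _ = Nc h x y := by
        simp only [map_add, map_smul, LinearMap.add_apply, LinearMap.smul_apply, hb]
        funext k
        fin_cases k <;>
          simp [Nc, e, Pi.single, Matrix.cons_val_zero, Matrix.cons_val_one] <;> ring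

/-- for Bia(VII_h), subtype (3), R₁₂₁₂=h², R₁₃₁₃=-h², R₂₃₂₃=h²,
ρ₁₁=2h², ρ₂₂=-2h², ρ₃₃=2h², ρ = 2h²g (Einstein), and τ = 6h². -/
theorem stmt15 (h : ℝ)
    (nabla : (Fin 3 → ℝ) →ₗ[ℝ] (Fin 3 → ℝ) →ₗ[ℝ] (Fin 3 → ℝ))
    (hK : ∀ i j k : Fin 3,
      2 * gB (nabla (e i) (e j)) (e k) =
        gB (brVII3 h (e i) (e j)) (e k) + gB (brVII3 h (e k) (e i)) (e j)
          + gB (brVII3 h (e k) (e j)) (e i)) :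
    Rt h nabla (e 0) (e 1) (e 0) (e 1) = h ^ 2 ∧
    Rt h nabla (e 0) (e 2) (e 0) (e 2) = -h ^ 2 ∧
    Rt h nabla (e 1) (e 2) (e 1) (e 2) = h ^ 2 ∧
    ricci h nabla 0 0 = 2 * h ^ 2 ∧
    ricci h nabla 1 1 = -2 * h ^ 2 ∧
    ricci h nabla 2 2 = 2 * h ^ 2 ∧
    (∀ j k, ricci h nabla j k = 2 * h ^ 2 * gB (e j) (e k)) ∧
    (∑ i, ginv i * ricci h nabla i i) = 6 * h ^ 2 := by
  have hn := nabla_eq h nabla hK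
  have hRt : ∀ x y z w, Rt h nabla x y z w =
      gB (Nc h x (Nc h y z) - Nc h y (Nc h x z) - Nc h (brVII3 h x y) z) w := by
    intro x y z w
    simp only [Rt, hn]
  have key : ∀ j k : Fin 3, ricci h nabla j k = 2 * h ^ 2 * gB (e j) (e k) := by
    intro j k
    simp only [ricci, hRt, Fin.sum_univ_three]
    fin_cases j <;> fin_cases k <;>
      simp [gB, ginv, Nc, brVII3, e, Pi.single] <;> ring
  refine ⟨?_, ?_, ?_, ?_, ?_, ?_, key, ?_⟩
  · rw [hRt]; simp [gB, Nc, brVII3, e, Pi.single]; ring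
  · rw [hRt]; simp [gB, Nc, brVII3, e, Pi.single]; ring
  · rw [hRt]; simp [gB, Nc, brVII3, e, Pi.single]; ring
  · rw [key]; simp [gB, e, Pi.single]
  · rw [key]; simp [gB, e, Pi.single]
  · rw [key]; simp [gB, e, Pi.single]
  · simp only [Fin.sum_univ_three, key]
    simp [gB, ginv, e, Pi.single]; ring
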